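/- Let G be a finite group, M a G-lattice, and 0 → M → S → N → 0 a flasque resolution of M (S a permutation module, N flasque). Then Sha²_ω(G, M) is isomorphic to the group cohomology H¹(G, N). -/

import Mathlib

/-! Preliminaries: a lightweight theory of `G`-modules (abelian groups with a
distributive `G`-action, i.e. `ℤ[G]`-modules), lattices, permutation modules,
flasque modules and flasque resolutions, the norm-one-torus character lattice
`Mn n` over the symmetric group `S_n`, and low-degree group cohomology with
the invariant `Ш²_ω`. -/

open Equiv

universe u

/-- A `G`-module: an additive commutative group with a distributive `G`-action
(equivalently, a `ℤ[G]`-module). -/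
structure GMod (G : Type u) [Group G] : Type (u + 1) where
  carrier : Type u
  [isAddCommGroup : AddCommGroup carrier]
  [isDistribMulAction : DistribMulAction G carrier]

attribute [instance] GMod.isAddCommGroup GMod.isDistribMulAction

namespace GMod

variable {G : Type u} [Group G]

instance : CoeSort (GMod G) (Type u) := ⟨GMod.carrier⟩

/-- A morphism of `G`-modules is an additive map commuting with the `G`-action. -/
def IsEquivariant {M N : GMod G} (f : M →+ N) : Prop :=
  ∀ (g : G) (m : M), f (g • m) = g • f m

/-- Two `G`-modules are isomorphic if there is an equivariant additive equivalence. -/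
def Iso (M N : GMod G) : Prop :=
  ∃ e : M ≃+ N, ∀ (g : G) (m : M), e (g • m) = g • e m

/-- Restriction of a `G`-module along a group homomorphism `φ : H →* G`. -/
def res (M : GMod G) {H : Type u} [Group H] (φ : H →* G) : GMod H where
  carrier := M
  isDistribMulAction :=
    { smul := fun h m => φ h • m
      one_smul := fun m => by show φ 1 • m = m; simp
      mul_smul := fun a b m => by
        show φ (a * b) • m = φ a • (φ b • m)
        rw [map_mul, mul_smul]
      smul_zero := fun a => by show φ a • (0 : M.carrier) = 0; simp
      smul_add := fun a x y => by
        show φ a • (x + y) = φ a • x + φ a • y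
        simp [smul_add] }

/-- The direct sum of two `G`-modules. -/
def prod (M N : GMod G) : GMod G where
  carrier := M × N

/-- The direct sum of `k` copies of a `G`-module. -/
def copies (k : ℕ) (M : GMod G) : GMod G where
  carrier := Fin k → M

/-- A trivial `G`-module. -/
def triv (G : Type u) [Group G] (A : Type u) [AddCommGroup A] : GMod G where
  carrier := A
  isDistribMulAction :=
    { smul := fun _ a => a
      one_smul := fun _ => rfl
      mul_smul := fun _ _ _ => rfl
      smul_zero := fun _ => rfl
      smul_add := fun _ _ _ => rfl }

/-- The permutation `G`-module `ℤ[X]` attached to an action `φ : G →* Perm X`,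
realized as functions `X → ℤ` with `(g • f) x = f ((φ g)⁻¹ x)`. -/
def permMod {X : Type u} (φ : G →* Equiv.Perm X) : GMod G where
  carrier := X → ℤ
  isDistribMulAction :=
    { smul := fun g f => fun x => f ((φ g)⁻¹ x)
      one_smul := fun f => by funext x; show f ((φ 1)⁻¹ x) = f x; simp
      mul_smul := fun g h f => by
        funext x
        show f ((φ (g * h))⁻¹ x) = f ((φ h)⁻¹ ((φ g)⁻¹ x))
        rw [map_mul, mul_inv_rev, Equiv.Perm.mul_apply]
      smul_zero := fun g => rfl
      smul_add := fun g a b => rfl }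

/-- The subgroup of `X → ℤ` generated by the all-ones vector (for `X = G` this
is `ℤ · N_G`, the span of the norm element of the group algebra). -/
def normSub (X : Type u) : AddSubgroup (X → ℤ) :=
  AddSubgroup.zmultiples (fun _ => (1 : ℤ))

/-- The additive endomorphism of `X → ℤ` induced by a permutation of `X`. -/
def permHomAdd {X : Type u} (σ : Equiv.Perm X) : (X → ℤ) →+ (X → ℤ) where
  toFun f := fun x => f (σ⁻¹ x)
  map_zero' := rfl
  map_add' _ _ := rfl

theorem normSub_le_comap {X : Type u} (σ : Equiv.Perm X) :
    normSub X ≤ (normSub X).comap (permHomAdd σ) := by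
  intro f hf
  rcases AddSubgroup.mem_zmultiples_iff.mp hf with ⟨k, rfl⟩
  exact AddSubgroup.mem_zmultiples_iff.mpr ⟨k, by funext x; simp [permHomAdd]⟩

/-- The quotient of the permutation module `ℤ[X]` by the span of the all-ones
vector, as a `G`-module.  For `X = Fin n` with the tautological action of
`S_n` this is the lattice `M_n`; for `X = G` with the regular action this is
`ℤ[G]/ℤ·N_G`. -/
def permModQuot {X : Type u} (φ : G →* Equiv.Perm X) : GMod G where
  carrier := (X → ℤ) ⧸ normSub X
  isDistribMulAction :=
    { smul := fun g q =>
        QuotientAddGroup.map _ _ (permHomAdd (φ g)) (normSub_le_comap (φ g)) q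
      one_smul := fun q => QuotientAddGroup.induction_on q (fun f => by
        show QuotientAddGroup.map _ _ (permHomAdd (φ 1)) _ (QuotientAddGroup.mk f)
            = QuotientAddGroup.mk f
        rw [QuotientAddGroup.map_mk]
        congr 1
        funext x
        simp [permHomAdd])
      mul_smul := fun g h q => QuotientAddGroup.induction_on q (fun f => by
        show QuotientAddGroup.map _ _ (permHomAdd (φ (g * h))) _ (QuotientAddGroup.mk f)
            = QuotientAddGroup.map _ _ (permHomAdd (φ g)) _
              (QuotientAddGroup.map _ _ (permHomAdd (φ h)) _ (QuotientAddGroup.mk f))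
        rw [QuotientAddGroup.map_mk, QuotientAddGroup.map_mk, QuotientAddGroup.map_mk]
        congr 1
        funext x
        simp [permHomAdd, map_mul, mul_inv_rev, Equiv.Perm.mul_apply])
      smul_zero := fun g => map_zero _
      smul_add := fun g a b => map_add _ a b }

/-- The character lattice `M_n = ℤ[S_n/S_{n-1}] / ℤ·(1,…,1)` of the norm-one
torus of a degree-`n` generic extension: the quotient of `Fin n → ℤ` (with the
coordinate-permuting action of `S_n`) by the span of the all-ones vector. -/
def Mn (n : ℕ) : GMod (Equiv.Perm (Fin n)) :=
  permModQuot (MonoidHom.id (Equiv.Perm (Fin n)))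

/-- The natural permutation module `Fin n → ℤ` of `S_n`. -/
def stdMod (n : ℕ) : GMod (Equiv.Perm (Fin n)) :=
  permMod (MonoidHom.id (Equiv.Perm (Fin n)))

/-- The regular `G`-module `ℤ[G]`, realized as functions `G → ℤ`. -/
def regular (G : Type u) [Group G] : GMod G :=
  permMod (MulAction.toPermHom G G)

/-- The quotient `ℤ[G]/ℤ·N_G` of the regular module by the span of the norm
element `N_G = Σ_{g ∈ G} g`. -/
def regModNorm (G : Type u) [Group G] : GMod G :=
  permModQuot (MulAction.toPermHom G G)

/-- A `G`-lattice: a `G`-module that is finitely generated and free over `ℤ`. -/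
def IsLattice (M : GMod G) : Prop :=
  Module.Free ℤ M ∧ Module.Finite ℤ M

/-- A permutation `G`-lattice: one admitting a finite `ℤ`-basis permuted by `G`. -/
def IsPermutation (M : GMod G) : Prop :=
  ∃ (ι : Type u) (_ : Finite ι) (b : Module.Basis ι ℤ M) (f : G →* Equiv.Perm ι),
    ∀ (g : G) (i : ι), g • b i = b (f g i)

/-- A stably permutation `G`-module: `N ⊕ P ≅ Q` for permutation modules `P, Q`. -/
def IsStablyPermutation (N : GMod G) : Prop :=
  ∃ P Q : GMod G, P.IsPermutation ∧ Q.IsPermutation ∧ Iso (N.prod P) Q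

/-- A flasque `G`-module: `Ĥ⁻¹(G', N) = 0` for every subgroup `G' ≤ G`, i.e.
every `x` killed by the norm of `G'` is a sum of elements `g • y - y`. -/
def IsFlasque [Finite G] (N : GMod G) : Prop :=
  ∀ (H : Subgroup G) (x : N),
    (∑ g ∈ (Set.toFinite (H : Set G)).toFinset, g • x) = 0 →
      x ∈ AddSubgroup.closure {z : N.carrier | ∃ g ∈ H, ∃ y : N.carrier, z = g • y - y}

/-- A flasque resolution `0 → M → S → N → 0`: a short exact sequence of
`G`-lattices with `S` a permutation module and `N` flasque. -/
def IsFlasqueResolution [Finite G] (M S N : GMod G) : Prop :=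
  M.IsLattice ∧ S.IsLattice ∧ N.IsLattice ∧ S.IsPermutation ∧ N.IsFlasque ∧
    ∃ (i : M →+ S) (p : S →+ N),
      IsEquivariant i ∧ IsEquivariant p ∧
        Function.Injective i ∧ Function.Surjective p ∧ i.range = p.ker

/-! ### Low-degree group cohomology via inhomogeneous cocycles. -/

/-- Inhomogeneous 2-cocycles of `G` with values in `M`. -/
def twoCocycles (M : GMod G) : AddSubgroup (G → G → M.carrier) where
  carrier := {f | ∀ g h k : G, g • f h k + f g (h * k) = f (g * h) k + f g h}
  zero_mem' := by intro g h k; simp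
  add_mem' := by
    intro a b ha hb g h k
    simp only [Pi.add_apply, smul_add]
    rw [add_add_add_comm, ha g h k, hb g h k, add_add_add_comm]
  neg_mem' := by
    intro a ha g h k
    simp only [Pi.neg_apply, smul_neg, ← neg_add, ha g h k]

/-- The differential sending a 1-cochain to a 2-coboundary. -/
def dOne (M : GMod G) : (G → M.carrier) →+ (G → G → M.carrier) where
  toFun c := fun g h => g • c h - c (g * h) + c g
  map_zero' := by funext g h; simp
  map_add' a b := by
    funext g h
    simp only [Pi.add_apply, smul_add]
    abel

/-- `H²(G, M)`: 2-cocycles modulo 2-coboundaries. -/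
def H2 (M : GMod G) : Type u :=
  twoCocycles M ⧸ ((dOne M).range.addSubgroupOf (twoCocycles M))

instance (M : GMod G) : AddCommGroup (H2 M) :=
  inferInstanceAs (AddCommGroup (_ ⧸ _))

/-- 1-cocycles (crossed homomorphisms) of `G` with values in `M`. -/
def oneCocycles (M : GMod G) : AddSubgroup (G → M.carrier) where
  carrier := {f | ∀ g h : G, f (g * h) = g • f h + f g}
  zero_mem' := by intro g h; simp
  add_mem' := by
    intro a b ha hb g h
    simp only [Pi.add_apply, smul_add, ha g h, hb g h]
    abel
  neg_mem' := by
    intro a ha g h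
    simp only [Pi.neg_apply, smul_neg, ha g h]
    abel

/-- The differential sending a 0-cochain to a 1-coboundary. -/
def dZero (M : GMod G) : M.carrier →+ (G → M.carrier) where
  toFun m := fun g => g • m - m
  map_zero' := by funext g; simp
  map_add' a b := by
    funext g
    simp only [Pi.add_apply, smul_add]
    abel

/-- `H¹(G, M)`: 1-cocycles modulo 1-coboundaries. -/
def H1 (M : GMod G) : Type u :=
  oneCocycles M ⧸ ((dZero M).range.addSubgroupOf (oneCocycles M))

instance (M : GMod G) : AddCommGroup (H1 M) :=
  inferInstanceAs (AddCommGroup (_ ⧸ _))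

/-- Restriction of 2-cocycles along a group homomorphism `φ : H →* G`. -/
def resTwoCocycles (M : GMod G) {H : Type u} [Group H] (φ : H →* G) :
    twoCocycles M →+ twoCocycles (M.res φ) where
  toFun f := ⟨fun a b => f.1 (φ a) (φ b), by
    intro a b c
    show φ a • f.1 (φ b) (φ c) + f.1 (φ a) (φ (b * c))
        = f.1 (φ (a * b)) (φ c) + f.1 (φ a) (φ b)
    rw [map_mul, map_mul]
    exact f.2 (φ a) (φ b) (φ c)⟩
  map_zero' := rfl
  map_add' _ _ := rfl

theorem coboundaries_le_comap_resTwoCocycles (M : GMod G) {H : Type u} [Group H]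
    (φ : H →* G) :
    ((dOne M).range.addSubgroupOf (twoCocycles M)) ≤
      (((dOne (M.res φ)).range.addSubgroupOf (twoCocycles (M.res φ))).comap
        (resTwoCocycles M φ)) := by
  intro f hf
  rcases hf with ⟨c, hc⟩
  refine ⟨fun h => c (φ h), ?_⟩
  have hc' : ∀ g h : G, g • c h - c (g * h) + c g = f.1 g h := fun g h =>
    congrFun (congrFun hc g) h
  funext a b
  show φ a • c (φ b) - c (φ (a * b)) + c (φ a) = f.1 (φ a) (φ b)
  rw [map_mul]
  exact hc' (φ a) (φ b)

/-- The restriction map `H²(G, M) → H²(H, M)` along `φ : H →* G`. -/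
def resH2 (M : GMod G) {H : Type u} [Group H] (φ : H →* G) :
    H2 M →+ H2 (M.res φ) :=
  QuotientAddGroup.map _ _ (resTwoCocycles M φ)
    (coboundaries_le_comap_resTwoCocycles M φ)

/-- `Ш²_ω(G, M)`: the subgroup of `H²(G, M)` of classes whose restriction to
every cyclic subgroup `⟨g⟩ ≤ G` vanishes. -/
def Sha2omega (M : GMod G) : AddSubgroup (H2 M) :=
  ⨅ g : G, (resH2 M ((Subgroup.zpowers g).subtype)).ker

end GMod

open GMod

/-! The connecting map `δ : H¹(G, N) → H²(G, M)` of `0 → M → S → N → 0` is injective since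
`H¹(G, S) = 0` for a permutation lattice `S`, and its image is the kernel of `H²(G, M) → H²(G, S)`.
Flasqueness of `N` gives `H¹(⟨g⟩, N) = Ĥ⁻¹(⟨g⟩, N) = 0` for every cyclic subgroup, so the image
lies in `Ш²_ω(G, M)`; conversely `Ш²_ω(G, S) = 0`, so `Ш²_ω(G, M)` lies in that kernel.

Both vanishing results for `S = ℤ[X]` rest on one fact: a 1-cocycle with values in `A[X]` that
vanishes at the points fixed by its argument is a coboundary. For `H¹` take `A = ℤ`, where this
vanishing is forced by torsion-freeness. For `Ш²_ω`, solve the 2-cocycle over `ℚ` by averaging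
and apply the fact with `A = ℚ/ℤ` to the rational solution reduced mod `ℤ`; at a fixed point the
cyclic restriction makes that reduction vanish. -/

namespace groupCohomology

open Subgroup (zpowers mem_zpowers)

section Map

variable {G A B F : Type*} [AddCommGroup A] [AddCommGroup B] [SMul G A] [SMul G B]
  [FunLike F A B] [AddMonoidHomClass F A B] {f : F}

theorem IsCocycle₁.map [Mul G] {c : G → A} (hc : IsCocycle₁ c)
    (hf : ∀ (g : G) a, f (g • a) = g • f a) : IsCocycle₁ (f ∘ c) := fun g h => by
  simp only [Function.comp_apply, hc g h, map_add, hf]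

theorem IsCoboundary₁.map {c : G → A} (hc : IsCoboundary₁ c)
    (hf : ∀ (g : G) a, f (g • a) = g • f a) : IsCoboundary₁ (f ∘ c) := by
  obtain ⟨a, ha⟩ := hc
  exact ⟨f a, fun g => by simp only [Function.comp_apply, ← ha g, map_sub, hf]⟩

theorem IsCocycle₂.map [Mul G] {c : G × G → A} (hc : IsCocycle₂ c)
    (hf : ∀ (g : G) a, f (g • a) = g • f a) : IsCocycle₂ (f ∘ c) := fun g h k => by
  simp only [Function.comp_apply]
  rw [← hf, ← map_add, ← map_add, hc g h k]

theorem IsCoboundary₂.map [Mul G] {c : G × G → A} (hc : IsCoboundary₂ c)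
    (hf : ∀ (g : G) a, f (g • a) = g • f a) : IsCoboundary₂ (f ∘ c) := by
  obtain ⟨x, hx⟩ := hc
  exact ⟨f ∘ x, fun g h => by simp only [Function.comp_apply, ← hx g h, map_add, map_sub, hf]⟩

theorem isCocycle₁_comp_of_primitive [Mul G] {q : G → A} {c : G × G → A}
    (hq : ∀ g h, g • q h - q (g * h) + q g = c (g, h)) (hc : ∀ x, f (c x) = 0)
    (hf : ∀ (g : G) a, f (g • a) = g • f a) : IsCocycle₁ (f ∘ q) := fun g h => by
  have := hc (g, h)
  rw [← hq, map_add, map_sub, hf] at this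
  simp only [Function.comp_apply]
  rw [eq_comm, ← sub_eq_zero, ← this]
  abel

end Map

section Primitive

variable {G A : Type*} [Monoid G] [AddCommGroup A] [DistribMulAction G A]

theorem isCocycle₁_smul_sub (a : A) : IsCocycle₁ fun g : G => g • a - a := fun g h => by
  simp only [smul_sub, mul_smul]
  abel

theorem IsCocycle₁.map_pow {c : G → A} (hc : IsCocycle₁ c) (g : G) (k : ℕ) :
    c (g ^ k) = ∑ j ∈ Finset.range k, g ^ j • c g := by
  induction k with
  | zero => simpa using map_one_of_isCocycle₁ hc
  | succ k ih => rw [pow_succ, hc, ih, Finset.sum_range_succ, add_comm]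

theorem isCocycle₁_sub_of_primitive {t t' : G → A} {c : G × G → A}
    (ht : ∀ g h, g • t h - t (g * h) + t g = c (g, h))
    (ht' : ∀ g h, g • t' h - t' (g * h) + t' g = c (g, h)) : IsCocycle₁ (t - t') := fun g h => by
  have := (ht g h).trans (ht' g h).symm
  simp only [Pi.sub_apply, smul_sub]
  rw [← sub_eq_zero, ← sub_eq_zero.mpr this.symm]
  abel

end Primitive

theorem isCoboundary₂_of_module_rat {G V : Type*} [Group G] [Finite G] [AddCommGroup V]
    [Module ℚ V] [DistribMulAction G V] {c : G × G → V} (hc : IsCocycle₂ c) :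
    IsCoboundary₂ c := by
  have := Fintype.ofFinite G
  have hn : (Fintype.card G : ℚ) ≠ 0 := by exact_mod_cast Fintype.card_ne_zero
  refine ⟨fun h => (Fintype.card G : ℚ)⁻¹ • ∑ k, c (h, k), fun g h => ?_⟩
  have hsum : ∑ k, (g • c (h, k) - c (g * h, k) + c (g, k)) = Fintype.card G • c (g, h) := by
    have hk : ∀ k, g • c (h, k) - c (g * h, k) = c (g, h) - c (g, h * k) := fun k => by
      rw [sub_eq_sub_iff_add_eq_add, ← hc g h k, add_comm]
    have hshift : ∑ k, c (g, h * k) = ∑ k, c (g, k) :=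
      Equiv.sum_comp (Equiv.mulLeft h) fun k => c (g, k)
    simp only [hk, Finset.sum_add_distrib, Finset.sum_sub_distrib, Finset.sum_const,
      Finset.card_univ, hshift]
    abel
  have hcomm : ∀ (q : ℚ) (v : V), g • q • v = q • g • v :=
    map_rat_smul (DistribSMul.toAddMonoidHom V g)
  show g • ((Fintype.card G : ℚ)⁻¹ • ∑ k, c (h, k)) - (Fintype.card G : ℚ)⁻¹ • ∑ k, c (g * h, k)
    + (Fintype.card G : ℚ)⁻¹ • ∑ k, c (g, k) = c (g, h)
  rw [hcomm, Finset.smul_sum, ← smul_sub, ← smul_add, ← Finset.sum_sub_distrib,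
    ← Finset.sum_add_distrib, hsum, ← Nat.cast_smul_eq_nsmul ℚ, inv_smul_smul₀ hn]

section Arrow

variable {G X A : Type*} [Group G] [MulAction G X] [AddCommGroup A]

/-- The permutation module `A[X]`, as functions `X → A`. -/
abbrev arrowDistribMulAction : DistribMulAction G (X → A) :=
  { arrowAction with
    smul_zero := fun _ => rfl
    smul_add := fun _ _ _ => rfl }

attribute [local instance] arrowDistribMulAction

theorem arrow_smul_apply (g : G) (F : X → A) (x : X) : (g • F) x = F (g⁻¹ • x) := rfl

theorem isCoboundary₁_of_apply_eq_zero_of_smul_eq {c : G → X → A} (hc : IsCocycle₁ c)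
    (hfix : ∀ g x, g • x = x → c g x = 0) : IsCoboundary₁ c := by
  have hwd : ∀ {a b : G} {z x : X}, a • z = x → b • z = x → c a x = c b x := by
    intro a b z x ha hb
    have hz : a⁻¹ • x = z := inv_smul_eq_iff.mpr ha.symm
    have hs : (a⁻¹ * b) • z = z := by rw [mul_smul, hb, hz]
    have := congrFun (hc a (a⁻¹ * b)) x
    rw [mul_inv_cancel_left, Pi.add_apply, arrow_smul_apply, hz, hfix _ _ hs, zero_add] at this
    exact this.symm
  let r : X → X := fun x => (Quotient.mk (MulAction.orbitRel G X) x).out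
  have hr : ∀ x, ∃ g : G, g • r x = x := fun x =>
    MulAction.mem_orbit_iff.mp <|
      MulAction.mem_orbit_symm.mp (MulAction.orbitRel_apply.mp (Quotient.mk_out x))
  choose τ hτ using hr
  -- integrate `c` from the chosen representative `r x` of the orbit of `x`
  refine ⟨fun x => -c (τ x) x, fun g => funext fun x => ?_⟩
  have hry : r (g⁻¹ • x) = r x :=
    congrArg Quotient.out <|
      Quotient.sound (MulAction.orbitRel_apply.mpr (MulAction.mem_orbit x g⁻¹))
  have hcoc := congrFun (hc g (τ (g⁻¹ • x))) x
  rw [Pi.add_apply, arrow_smul_apply,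
    hwd (by rw [mul_smul, ← hry, hτ, smul_inv_smul]) (hτ x)] at hcoc
  rw [Pi.sub_apply, arrow_smul_apply, hcoc]
  abel

theorem IsCocycle₁.apply_pow_apply {c : G → X → A} (hc : IsCocycle₁ c) {g : G} {x : X}
    (hx : g • x = x) (k : ℕ) : c (g ^ k) x = k • c g x := by
  have hfix : ∀ j : ℕ, (g ^ j)⁻¹ • x = x := fun j =>
    (MulAction.stabilizer G x).inv_mem ((MulAction.stabilizer G x).pow_mem hx j)
  simp only [hc.map_pow, Finset.sum_apply, arrow_smul_apply, hfix, Finset.sum_const,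
    Finset.card_range]

theorem IsCocycle₁.apply_eq_zero_of_smul_eq [IsAddTorsionFree A] {c : G → X → A}
    (hc : IsCocycle₁ c) {g : G} (hg : IsOfFinOrder g) {x : X} (hx : g • x = x) : c g x = 0 := by
  have := hc.apply_pow_apply hx (orderOf g)
  rw [pow_orderOf_eq_one, map_one_of_isCocycle₁ hc, Pi.zero_apply, eq_comm] at this
  exact nsmul_right_injective hg.orderOf_pos.ne' (this.trans (nsmul_zero _).symm)

theorem isCoboundary₁_of_isAddTorsionFree [Finite G] [IsAddTorsionFree A] {c : G → X → A}
    (hc : IsCocycle₁ c) : IsCoboundary₁ c :=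
  isCoboundary₁_of_apply_eq_zero_of_smul_eq hc fun g _ hx =>
    hc.apply_eq_zero_of_smul_eq (isOfFinOrder_of_finite g) hx

end Arrow

section IntegralPermutation

variable {G X : Type*} [Group G] [MulAction G X]

attribute [local instance] arrowDistribMulAction

theorem isCoboundary₂_of_rat_primitive {F : G × G → X → ℤ} {q : G → X → ℚ}
    (hq : ∀ g h, g • q h - q (g * h) + q g = (Int.castAddHom ℚ).compLeft X (F (g, h)))
    (hmod : IsCoboundary₁ ((QuotientAddGroup.mk' (Int.castAddHom ℚ).range).compLeft X ∘ q)) :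
    IsCoboundary₂ F := by
  obtain ⟨mbar, hmbar⟩ := hmod
  obtain ⟨m, rfl⟩ :
      ∃ m : X → ℚ, (QuotientAddGroup.mk' (Int.castAddHom ℚ).range).compLeft X m = mbar :=
    ⟨fun x => (mbar x).out, funext fun x => QuotientAddGroup.out_eq' _⟩
  have hint : ∀ g x, (q g - (g • m - m)) x ∈ (Int.castAddHom ℚ).range := fun g x => by
    have := congrFun (hmbar g) x
    rw [← QuotientAddGroup.eq_zero_iff]
    simp only [Pi.sub_apply, arrow_smul_apply, Function.comp_apply] at this ⊢
    rw [QuotientAddGroup.mk_sub, QuotientAddGroup.mk_sub]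
    exact sub_eq_zero.mpr this.symm
  choose t ht using hint
  have hinj : Function.Injective ((Int.castAddHom ℚ).compLeft X) :=
    fun a b h => funext fun x => Int.cast_injective (congrFun h x)
  have ht' : ∀ g, (Int.castAddHom ℚ).compLeft X (t g) = q g - (g • m - m) :=
    fun g => funext (ht g)
  have hequiv : ∀ (g : G) v, (Int.castAddHom ℚ).compLeft X (g • v) =
      g • (Int.castAddHom ℚ).compLeft X v := fun _ _ => rfl
  refine ⟨t, fun g h => hinj ?_⟩
  rw [← hq, map_add, map_sub, hequiv, ht', ht', ht']
  simp only [smul_sub, mul_smul]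
  abel

theorem mem_range_intCast_of_smul_eq [Finite G] {F : G × G → X → ℤ} {q : G → X → ℚ}
    (hq : ∀ g h, g • q h - q (g * h) + q g = (Int.castAddHom ℚ).compLeft X (F (g, h)))
    (hres : ∀ g : G, IsCoboundary₂ fun a : zpowers g × zpowers g => F (a.1, a.2))
    {g : G} {x : X} (hx : g • x = x) : q g x ∈ (Int.castAddHom ℚ).range := by
  obtain ⟨u, hu⟩ := hres g
  have hw : IsCocycle₁ ((fun a : zpowers g => q a) - (Int.castAddHom ℚ).compLeft X ∘ u) :=
    isCocycle₁_sub_of_primitive (c := fun a => (Int.castAddHom ℚ).compLeft X (F (a.1, a.2)))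
      (fun a b => hq a b) fun a b => by
        have := congrArg ((Int.castAddHom ℚ).compLeft X) (hu a b)
        rwa [map_add, map_sub] at this
  have := hw.apply_eq_zero_of_smul_eq (isOfFinOrder_of_finite ⟨g, mem_zpowers g⟩) hx
  exact ⟨u ⟨g, mem_zpowers g⟩ x, (sub_eq_zero.mp this).symm⟩

theorem isCoboundary₂_of_forall_isCoboundary₂_zpowers [Finite G] {F : G × G → X → ℤ}
    (hF : IsCocycle₂ F)
    (hres : ∀ g : G, IsCoboundary₂ fun a : zpowers g × zpowers g => F (a.1, a.2)) :
    IsCoboundary₂ F := by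
  obtain ⟨q, hq⟩ :=
    isCoboundary₂_of_module_rat (hF.map (f := (Int.castAddHom ℚ).compLeft X) fun _ _ => rfl)
  refine isCoboundary₂_of_rat_primitive hq (isCoboundary₁_of_apply_eq_zero_of_smul_eq
    (isCocycle₁_comp_of_primitive hq (fun gh => ?_) fun _ _ => rfl) fun g x hx => ?_)
  · exact funext fun x => (QuotientAddGroup.eq_zero_iff _).mpr ⟨F gh x, rfl⟩
  · exact (QuotientAddGroup.eq_zero_iff _).mpr (mem_range_intCast_of_smul_eq hq hres hx)

end IntegralPermutation

end groupCohomology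

namespace GMod

open groupCohomology
open Subgroup (zpowers)

variable {G : Type u} [Group G]

section Cochains

variable {M S : GMod G}

theorem map_dOne {f : M →+ S} (hf : IsEquivariant f) (u : G → M) (g h : G) :
    f (dOne M u g h) = dOne S (f ∘ u) g h := by
  simp only [dOne, AddMonoidHom.coe_mk, ZeroHom.coe_mk, map_add, map_sub, Function.comp_apply]
  rw [hf]

theorem map_dZero {f : M →+ S} (hf : IsEquivariant f) (m : M) (g : G) :
    f (dZero M m g) = dZero S (f m) g := by
  simp only [dZero, AddMonoidHom.coe_mk, ZeroHom.coe_mk, map_sub]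
  rw [hf]

theorem dOne_dZero (m : M) : dOne M (dZero M m) = 0 :=
  funext₂ fun g h => by
    simp only [dOne, dZero, AddMonoidHom.coe_mk, ZeroHom.coe_mk, smul_sub, mul_smul,
      Pi.zero_apply]
    abel

theorem isCocycle₁_iff_dOne_eq_zero {c : G → M} : IsCocycle₁ c ↔ dOne M c = 0 := by
  simp only [IsCocycle₁, funext_iff, dOne, AddMonoidHom.coe_mk, ZeroHom.coe_mk, Pi.zero_apply]
  refine forall₂_congr fun g h => ?_
  rw [sub_add_eq_add_sub, sub_eq_zero, eq_comm]

theorem isCocycle₂_iff_mem_twoCocycles {f : G → G → M} :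
    IsCocycle₂ (Function.uncurry f) ↔ f ∈ twoCocycles M :=
  ⟨fun hf g h k => (hf g h k).symm, fun hf g h k => (hf g h k).symm⟩

theorem dOne_mem_twoCocycles (u : G → M) : dOne M u ∈ twoCocycles M := by
  intro g h k
  simp only [dOne, AddMonoidHom.coe_mk, ZeroHom.coe_mk, smul_sub, smul_add, mul_smul, mul_assoc]
  abel

theorem mem_twoCocycles_of_injective {f : M →+ S} (hf : IsEquivariant f)
    (hinj : Function.Injective f) {F : G → G → M} (hF : (fun g h => f (F g h)) ∈ twoCocycles S) :
    F ∈ twoCocycles M := fun g h k => hinj (by rw [map_add, map_add, hf]; exact hF g h k)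

end Cochains

def H2.mk (M : GMod G) : twoCocycles M →+ H2 M := QuotientAddGroup.mk' _

def H1.mk (N : GMod G) : oneCocycles N →+ H1 N := QuotientAddGroup.mk' _

theorem H2.mk_surjective (M : GMod G) : Function.Surjective (H2.mk M) :=
  QuotientAddGroup.mk'_surjective _

theorem H1.mk_surjective (N : GMod G) : Function.Surjective (H1.mk N) :=
  QuotientAddGroup.mk'_surjective _

theorem H2.mk_eq_zero_iff {M : GMod G} (f : twoCocycles M) :
    H2.mk M f = 0 ↔ IsCoboundary₂ (Function.uncurry f.1) := by
  refine (QuotientAddGroup.eq_zero_iff f).trans ?_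
  rw [AddSubgroup.mem_addSubgroupOf]
  simp only [AddMonoidHom.mem_range, funext_iff, IsCoboundary₂, Function.uncurry_apply_pair]
  rfl

theorem H1.mk_eq_zero_iff {N : GMod G} (c : oneCocycles N) :
    H1.mk N c = 0 ↔ IsCoboundary₁ c.1 := by
  refine (QuotientAddGroup.eq_zero_iff c).trans ?_
  rw [AddSubgroup.mem_addSubgroupOf]
  simp only [AddMonoidHom.mem_range, funext_iff, IsCoboundary₁]
  rfl

theorem H2.mk_mem_Sha2omega_iff {M : GMod G} (f : twoCocycles M) :
    H2.mk M f ∈ Sha2omega M ↔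
      ∀ g : G, IsCoboundary₂ fun a : zpowers g × zpowers g => f.1 a.1 a.2 := by
  simp only [Sha2omega, AddSubgroup.mem_iInf, AddMonoidHom.mem_ker]
  exact forall_congr' fun g => H2.mk_eq_zero_iff (resTwoCocycles M (zpowers g).subtype f)

section Permutation

attribute [local instance] arrowDistribMulAction

theorem IsPermutation.exists_addEquiv {S : GMod G} (hS : S.IsPermutation) :
    ∃ (ι : Type u) (_ : MulAction G ι) (_ : Finite ι) (e : S ≃+ (ι → ℤ)),
      ∀ (g : G) (s : S), e (g • s) = g • e s := by
  classical
  obtain ⟨ι, _, b, f, hb⟩ := hS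
  let _ : MulAction G ι := MulAction.compHom ι f
  refine ⟨ι, inferInstance, inferInstance, b.equivFun.toAddEquiv, fun g s => ?_⟩
  have hbasis : b.equivFun.toLinearMap ∘ₗ (DistribSMul.toAddMonoidHom S g).toIntLinearMap =
      (DistribSMul.toAddMonoidHom (ι → ℤ) g).toIntLinearMap ∘ₗ b.equivFun.toLinearMap :=
    b.ext fun j => funext fun k => by
      simp only [LinearMap.comp_apply, LinearEquiv.coe_coe, AddMonoidHom.coe_toIntLinearMap,
        DistribSMul.toAddMonoidHom_apply, hb, arrow_smul_apply, Module.Basis.equivFun_self]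
      rw [eq_inv_smul_iff]
      rfl
  exact LinearMap.congr_fun hbasis s

theorem IsPermutation.isCoboundary₁ [Finite G] {S : GMod G} (hS : S.IsPermutation)
    {w : G → S} (hw : IsCocycle₁ w) : IsCoboundary₁ w := by
  obtain ⟨ι, _, _, e, he⟩ := hS.exists_addEquiv
  have he' : ∀ (g : G) v, e.symm (g • v) = g • e.symm v := fun g v => by
    rw [e.symm_apply_eq, he, e.apply_symm_apply]
  simpa [Function.comp_def] using (isCoboundary₁_of_isAddTorsionFree (hw.map he)).map he'

theorem IsPermutation.isCoboundary₂_of_forall_isCoboundary₂_zpowers [Finite G] {S : GMod G}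
    (hS : S.IsPermutation) {F : G × G → S} (hF : IsCocycle₂ F)
    (hres : ∀ g : G, IsCoboundary₂ fun a : zpowers g × zpowers g => F (a.1, a.2)) :
    IsCoboundary₂ F := by
  obtain ⟨ι, _, _, e, he⟩ := hS.exists_addEquiv
  have he' : ∀ (g : G) v, e.symm (g • v) = g • e.symm v := fun g v => by
    rw [e.symm_apply_eq, he, e.apply_symm_apply]
  simpa [Function.comp_def] using
    (groupCohomology.isCoboundary₂_of_forall_isCoboundary₂_zpowers (hF.map he)
    fun g => (hres g).map fun a s => he a s).map he'

end Permutation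

theorem IsFlasque.isCoboundary₁_zpowers [Finite G] {N : GMod G} (hN : N.IsFlasque) {c : G → N}
    (hc : IsCocycle₁ c) (g : G) : IsCoboundary₁ fun a : zpowers g => c a := by
  classical
  have hpow : ∀ a ∈ zpowers g, ∃ k : ℕ, g ^ k = a := fun a ha =>
    mem_powers_iff_mem_zpowers.mpr ha
  have hnorm : ∑ a ∈ (Set.toFinite (zpowers g : Set G)).toFinset, a • c g = 0 := by
    have : (Set.toFinite (zpowers g : Set G)).toFinset =
        (Finset.range (orderOf g)).image (g ^ ·) := by
      ext a
      simp [mem_zpowers_iff_mem_range_orderOf]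
    rw [this, Finset.sum_image (pow_injOn_Iio_orderOf.mono fun j hj => Finset.mem_range.mp hj),
      ← hc.map_pow, pow_orderOf_eq_one, map_one_of_isCocycle₁ hc]
  -- `Ĥ⁻¹(⟨g⟩, N) = 0`, and `a • y - y ∈ (g - 1) N` for every power `a` of `g`
  obtain ⟨y, hy⟩ : c g ∈ (DistribSMul.toAddMonoidHom N g - AddMonoidHom.id N).range := by
    refine AddSubgroup.closure_le _ |>.mpr ?_ (hN _ _ hnorm)
    rintro _ ⟨a, ha, y, rfl⟩
    obtain ⟨k, rfl⟩ := hpow a ha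
    refine ⟨∑ j ∈ Finset.range k, g ^ j • y, ?_⟩
    simp only [AddMonoidHom.sub_apply, DistribSMul.toAddMonoidHom_apply, AddMonoidHom.id_apply,
      Finset.smul_sum, smul_smul, ← pow_succ', ← Finset.sum_sub_distrib,
      Finset.sum_range_sub fun j => g ^ j • y, pow_zero, one_smul]
  refine ⟨y, fun ⟨a, ha⟩ => ?_⟩
  obtain ⟨k, rfl⟩ := hpow a ha
  simp only [AddMonoidHom.sub_apply, DistribSMul.toAddMonoidHom_apply, AddMonoidHom.id_apply] at hy
  show g ^ k • y - y = c (g ^ k)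
  rw [(isCocycle₁_smul_sub y).map_pow, hc.map_pow, hy]

/-- A short exact sequence `0 → M → S → N → 0` of `G`-modules with an additive, not necessarily
equivariant, section `σ` of `p`. -/
structure AddSplitShortExact (M S N : GMod G) where
  i : M →+ S
  p : S →+ N
  σ : N →+ S
  isEquivariant_i : IsEquivariant i
  isEquivariant_p : IsEquivariant p
  injective_i : Function.Injective i
  range_i : i.range = p.ker
  p_σ : ∀ n, p (σ n) = n

namespace AddSplitShortExact

variable {M S N : GMod G} (E : AddSplitShortExact M S N)

theorem exists_i_eq {s : S} (hs : E.p s = 0) : ∃ m, E.i m = s := by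
  rw [← AddMonoidHom.mem_range, E.range_i]
  exact hs

theorem p_i (m : M) : E.p (E.i m) = 0 := by
  rw [← AddMonoidHom.mem_ker, ← E.range_i]
  exact ⟨m, rfl⟩

noncomputable def connectingCochain (c : G → N) : G → G → M :=
  fun g h => Function.invFun E.i (dOne S (E.σ ∘ c) g h)

theorem i_connectingCochain {c : G → N} (hc : IsCocycle₁ c) (g h : G) :
    E.i (E.connectingCochain c g h) = dOne S (E.σ ∘ c) g h := by
  refine Function.invFun_eq (E.exists_i_eq ?_)
  rw [map_dOne E.isEquivariant_p]
  have : E.p ∘ E.σ ∘ c = c := funext fun x => E.p_σ (c x)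
  rw [this, isCocycle₁_iff_dOne_eq_zero.mp hc]
  rfl

theorem connectingCochain_mem_twoCocycles {c : G → N} (hc : IsCocycle₁ c) :
    E.connectingCochain c ∈ twoCocycles M := by
  refine mem_twoCocycles_of_injective E.isEquivariant_i E.injective_i ?_
  simp only [E.i_connectingCochain hc]
  exact dOne_mem_twoCocycles _

theorem connectingCochain_add {c c' : G → N} (hc : IsCocycle₁ c) (hc' : IsCocycle₁ c') :
    E.connectingCochain (c + c') = E.connectingCochain c + E.connectingCochain c' := by
  have hσ : E.σ ∘ (c + c') = E.σ ∘ c + E.σ ∘ c' := funext fun x => map_add E.σ (c x) (c' x)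
  funext g h
  apply E.injective_i
  rw [Pi.add_apply, Pi.add_apply, map_add, E.i_connectingCochain ((oneCocycles N).add_mem hc hc'),
    E.i_connectingCochain hc, E.i_connectingCochain hc', hσ, map_add]
  rfl

noncomputable def connecting : oneCocycles N →+ twoCocycles M :=
  AddMonoidHom.mk' (fun c => ⟨E.connectingCochain c.1, E.connectingCochain_mem_twoCocycles c.2⟩)
    fun c c' => Subtype.ext (E.connectingCochain_add c.2 c'.2)

theorem i_connecting (c : oneCocycles N) (g h : G) :
    E.i ((E.connecting c).1 g h) = dOne S (E.σ ∘ c.1) g h :=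
  E.i_connectingCochain c.2 g h

theorem exists_eq_connecting_comp {H : Type*} [Group H] (φ : H →* G) (c : oneCocycles N) {y : N}
    (hy : ∀ a, φ a • y - y = c.1 (φ a)) :
    ∃ u : H → M, ∀ a b, φ a • u b - u (a * b) + u a = (E.connecting c).1 (φ a) (φ b) := by
  set w : G → S := E.σ ∘ c.1 - dZero S (E.σ y)
  have hw : ∀ a, E.p (w (φ a)) = 0 := fun a => by
    simp only [w, Pi.sub_apply, Function.comp_apply, map_sub, E.p_σ, map_dZero E.isEquivariant_p]
    exact sub_eq_zero.mpr (hy a).symm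
  choose u hu using fun a => E.exists_i_eq (hw a)
  refine ⟨u, fun a b => E.injective_i ?_⟩
  calc E.i (φ a • u b - u (a * b) + u a) = dOne S w (φ a) (φ b) := by
        rw [map_add, map_sub, E.isEquivariant_i, hu, hu, hu, map_mul]
        rfl
    _ = E.i ((E.connecting c).1 (φ a) (φ b)) := by
        rw [E.i_connecting, map_sub, dOne_dZero, sub_zero]

noncomputable def δ : H1 N →+ H2 M :=
  QuotientAddGroup.lift _ ((H2.mk M).comp E.connecting) fun c hc => by
    obtain ⟨y, hy⟩ := AddSubgroup.mem_addSubgroupOf.mp hc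
    obtain ⟨u, hu⟩ := E.exists_eq_connecting_comp (MonoidHom.id G) c fun a => congrFun hy a
    exact (H2.mk_eq_zero_iff _).mpr ⟨u, hu⟩

theorem δ_mk (c : oneCocycles N) : E.δ (H1.mk N c) = H2.mk M (E.connecting c) := rfl

theorem δ_injective (hS : ∀ w : G → S, IsCocycle₁ w → IsCoboundary₁ w) :
    Function.Injective E.δ := by
  refine (injective_iff_map_eq_zero _).mpr fun ξ hξ => ?_
  obtain ⟨c, rfl⟩ := H1.mk_surjective N ξ
  obtain ⟨u, hu⟩ := (H2.mk_eq_zero_iff _).mp ((E.δ_mk c).symm.trans hξ)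
  have hdu : dOne S (E.i ∘ u) = dOne S (E.σ ∘ c.1) := funext₂ fun g h => by
    rw [← map_dOne E.isEquivariant_i, ← E.i_connecting]
    exact congrArg E.i (hu g h)
  obtain ⟨s, hs⟩ := hS (E.σ ∘ c.1 - E.i ∘ u)
    (isCocycle₁_iff_dOne_eq_zero.mpr (by rw [map_sub, hdu, sub_self]))
  refine (H1.mk_eq_zero_iff c).mpr ⟨E.p s, fun g => ?_⟩
  rw [← E.isEquivariant_p, ← map_sub, hs g, Pi.sub_apply, map_sub, Function.comp_apply,
    Function.comp_apply, E.p_σ, E.p_i, sub_zero]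

theorem range_δ_le_sha2omega (hN : ∀ c : G → N, IsCocycle₁ c →
      ∀ g : G, IsCoboundary₁ fun a : zpowers g => c a) :
    E.δ.range ≤ Sha2omega M := by
  rintro _ ⟨ξ, rfl⟩
  obtain ⟨c, rfl⟩ := H1.mk_surjective N ξ
  refine (H2.mk_mem_Sha2omega_iff _).mpr fun g => ?_
  obtain ⟨y, hy⟩ := hN c.1 c.2 g
  exact E.exists_eq_connecting_comp (zpowers g).subtype c hy

theorem sha2omega_le_range_δ (hS : ∀ F : G × G → S, IsCocycle₂ F →
      (∀ g : G, IsCoboundary₂ fun a : zpowers g × zpowers g => F (a.1, a.2)) →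
      IsCoboundary₂ F) :
    Sha2omega M ≤ E.δ.range := by
  intro ξ hξ
  obtain ⟨f, rfl⟩ := H2.mk_surjective M ξ
  obtain ⟨t, ht⟩ := hS (E.i ∘ Function.uncurry f.1)
    ((isCocycle₂_iff_mem_twoCocycles.mpr f.2).map E.isEquivariant_i)
    fun g => (((H2.mk_mem_Sha2omega_iff f).mp hξ g).map fun a m => E.isEquivariant_i a m)
  have hdt : dOne S t = fun g h => E.i (f.1 g h) := funext₂ ht
  have hc : IsCocycle₁ (E.p ∘ t) := by
    refine isCocycle₁_iff_dOne_eq_zero.mpr (funext₂ fun g h => ?_)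
    rw [← map_dOne E.isEquivariant_p, hdt]
    exact E.p_i _
  let c : oneCocycles N := ⟨E.p ∘ t, hc⟩
  have hw : ∀ g, E.p ((E.σ ∘ c.1 - t) g) = 0 := fun g => by
    simp only [c, Pi.sub_apply, Function.comp_apply, map_sub, E.p_σ, sub_self]
  choose u hu using fun g => E.exists_i_eq (hw g)
  refine ⟨H1.mk N c, (E.δ_mk c).trans (sub_eq_zero.mp ?_)⟩
  rw [← map_sub, H2.mk_eq_zero_iff]
  refine ⟨u, fun g h => E.injective_i ?_⟩
  show E.i (dOne M u g h) = E.i ((E.connecting c).1 g h - f.1 g h)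
  rw [map_dOne E.isEquivariant_i, show E.i ∘ u = E.σ ∘ c.1 - t from funext hu, map_sub,
    Pi.sub_apply, Pi.sub_apply, ← E.i_connecting, hdt, map_sub]

noncomputable def sha2omegaEquivH1 (hS₁ : ∀ w : G → S, IsCocycle₁ w → IsCoboundary₁ w)
    (hS₂ : ∀ F : G × G → S, IsCocycle₂ F →
      (∀ g : G, IsCoboundary₂ fun a : zpowers g × zpowers g => F (a.1, a.2)) →
      IsCoboundary₂ F)
    (hN : ∀ c : G → N, IsCocycle₁ c → ∀ g : G, IsCoboundary₁ fun a : zpowers g => c a) :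
    Sha2omega M ≃+ H1 N :=
  (AddEquiv.addSubgroupCongr
      (le_antisymm (E.range_δ_le_sha2omega hN) (E.sha2omega_le_range_δ hS₂)).symm).trans
    (AddMonoidHom.ofInjective (E.δ_injective hS₁)).symm

end AddSplitShortExact

theorem IsFlasqueResolution.nonempty_addSplitShortExact [Finite G] {M S N : GMod G}
    (h : IsFlasqueResolution M S N) : Nonempty (AddSplitShortExact M S N) := by
  obtain ⟨-, -, ⟨_, -⟩, -, -, i, p, hi, hp, hinj, hsurj, hexact⟩ := h
  obtain ⟨σ, hσ⟩ := Module.projective_lifting_property p.toIntLinearMap LinearMap.id hsurj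
  exact ⟨⟨i, p, σ.toAddMonoidHom, hi, hp, hinj, hexact, LinearMap.congr_fun hσ⟩⟩

end GMod

/-- For a flasque resolution `0 → M → S → N → 0` of `G`-lattices,
`Ш²_ω(G, M) ≅ H¹(G, N)`. -/
theorem sha_iso_H1_of_flasqueResolution (G : Type u) [Group G] [Finite G]
    (M S N : GMod G) (h : IsFlasqueResolution M S N) :
    Nonempty (↥(Sha2omega M) ≃+ H1 N) := by
  obtain ⟨E⟩ := h.nonempty_addSplitShortExact
  obtain ⟨-, -, -, hS, hN, -⟩ := h
  exact ⟨E.sha2omegaEquivH1 (fun _ => hS.isCoboundary₁)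
    (fun _ => hS.isCoboundary₂_of_forall_isCoboundary₂_zpowers)
    fun _ hc => hN.isCoboundary₁_zpowers hc⟩
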